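/- Let C be a De Morgan clone with DMA ⊆ C. Then the following are equivalent: (1) for all f, g ∈ C of the same arity, if f and g have the same truth conditions (i.e., for every input tuple ā, f(ā) ∈ {t, b} iff g(ā) ∈ {t, b}), then f = g; (2) every function in C is harmonious, i.e., C ⊆ ⟨∧, ∨, t, f, −, ∂⟩. -/

import Mathlib

set_option autoImplicit false

/-- The four truth values of the Belnap–Dunn logic. -/
inductive DM4 : Type
  | t
  | f
  | n
  | b
deriving DecidableEq

namespace DM4

/-- De Morgan negation. -/
def neg : DM4 → DM4
  | t => f
  | f => t
  | n => n
  | b => b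

/-- Conflation. -/
def conf : DM4 → DM4
  | t => t
  | f => f
  | n => b
  | b => n

/-- Meet in the truth order. -/
def meet : DM4 → DM4 → DM4
  | f, _ => f
  | _, f => f
  | t, y => y
  | x, t => x
  | n, n => n
  | b, b => b
  | n, b => f
  | b, n => f

/-- Join in the truth order. -/
def join : DM4 → DM4 → DM4
  | t, _ => t
  | _, t => t
  | f, y => y
  | x, f => x
  | n, n => n
  | b, b => b
  | n, b => t
  | b, n => t

/-- Meet in the information order (⊗). -/
def imeet : DM4 → DM4 → DM4
  | n, _ => n
  | _, n => n
  | b, y => y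
  | x, b => x
  | t, t => t
  | f, f => f
  | t, f => n
  | f, t => n

/-- Join in the information order (⊕). -/
def ijoin : DM4 → DM4 → DM4
  | b, _ => b
  | _, b => b
  | n, y => y
  | x, n => x
  | t, t => t
  | f, f => f
  | t, f => b
  | f, t => b

/-- The truth order: least element `f`, greatest element `t`, with `n`, `b` incomparable. -/
def tle (x y : DM4) : Prop := x = y ∨ x = f ∨ y = t

/-- The information order: least element `n`, greatest element `b`, with `t`, `f` incomparable. -/
def ile (x y : DM4) : Prop := x = y ∨ x = n ∨ y = b

/-- □: maps t to t and everything else to f. -/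
def box : DM4 → DM4
  | t => t
  | _ => f

/-- ◇: maps f to f and everything else to t. -/
def diamond : DM4 → DM4
  | f => f
  | _ => t

/-- Δ: maps t, b to t and n, f to f. -/
def delta : DM4 → DM4
  | t => t
  | b => t
  | _ => f

/-- ∇: maps t, n to t and b, f to f. -/
def nabla : DM4 → DM4
  | t => t
  | n => t
  | _ => f

/-- id_{b↦n}: maps b to n and fixes t, f, n. -/
def idbn : DM4 → DM4
  | b => n
  | x => x

/-- id_{n↦b}: maps n to b and fixes t, f, b. -/
def idnb : DM4 → DM4
  | n => b
  | x => x

/-- id_{n↦t}: maps n to t and fixes t, f, b. -/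
def idnt : DM4 → DM4
  | n => t
  | x => x

/-- id_{b↦t}: maps b to t and fixes t, f, n. -/
def idbt : DM4 → DM4
  | b => t
  | x => x

/-- t_{n↦n}: maps n to n and everything else to t. -/
def tnn : DM4 → DM4
  | n => n
  | _ => t

/-- t_{b↦b}: maps b to b and everything else to t. -/
def tbb : DM4 → DM4
  | b => b
  | _ => t

/-- The binary function pbp²₁. -/
def pbp1 : DM4 → DM4 → DM4
  | t, t => t | t, f => f | t, n => f | t, b => b
  | f, t => t | f, f => f | f, n => f | f, b => b
  | n, t => t | n, f => f | n, n => n | n, b => b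
  | b, t => b | b, f => f | b, n => f | b, b => b

/-- The binary function pbp²₂. -/
def pbp2 : DM4 → DM4 → DM4
  | t, t => t | t, f => f | t, n => n | t, b => f
  | f, t => t | f, f => f | f, n => n | f, b => f
  | n, t => n | n, f => f | n, n => n | n, b => f
  | b, t => t | b, f => f | b, n => n | b, b => b

/-- The binary function mnh²₁. -/
def mnh1 : DM4 → DM4 → DM4
  | t, t => f | t, f => f | t, n => n | t, b => b
  | f, t => f | f, f => f | f, n => n | f, b => b
  | n, t => f | n, f => f | n, n => n | n, b => f
  | b, t => f | b, f => f | b, n => n | b, b => b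

/-- The binary function mnh²₂. -/
def mnh2 : DM4 → DM4 → DM4
  | t, t => f | t, f => f | t, n => n | t, b => b
  | f, t => f | f, f => f | f, n => n | f, b => b
  | n, t => f | n, f => f | n, n => n | n, b => b
  | b, t => f | b, f => f | b, n => f | b, b => b

/-- The binary function mhnp². -/
def mhnp2 : DM4 → DM4 → DM4
  | t, _ => t
  | f, _ => t
  | n, b => f
  | n, _ => n
  | b, n => f
  | b, _ => b

/-- The binary function mnp²₁. -/
def mnp1 : DM4 → DM4 → DM4
  | t, b => b
  | t, _ => t
  | f, b => b
  | f, _ => t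
  | n, b => f
  | n, _ => n
  | b, n => f
  | b, _ => b

/-- The binary function mnp²₂. -/
def mnp2 : DM4 → DM4 → DM4
  | t, _ => t
  | f, _ => t
  | n, _ => n
  | b, n => f
  | b, _ => b

/-- The binary function mnp²₃. -/
def mnp3 : DM4 → DM4 → DM4
  | t, n => n
  | t, _ => t
  | f, n => n
  | f, _ => t
  | n, b => f
  | n, _ => n
  | b, n => f
  | b, _ => b

/-- The binary function mnp²₄. -/
def mnp4 : DM4 → DM4 → DM4
  | t, _ => t
  | f, _ => t
  | n, b => f
  | n, _ => n
  | b, _ => b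

/-- The ternary function mhnp³. -/
def mhnp3 : DM4 → DM4 → DM4 → DM4
  | _, t, _ => f
  | _, f, _ => f
  | t, n, _ => n
  | f, n, _ => f
  | b, n, _ => f
  | n, n, b => f
  | n, n, _ => n
  | t, b, _ => b
  | f, b, _ => f
  | n, b, _ => f
  | b, b, n => f
  | b, b, _ => b

/-- The set of designated values. -/
def Des : Set DM4 := {t, b}

/-- Designatedness as a Boolean predicate. -/
def des : DM4 → Bool
  | t => true
  | b => true
  | _ => false

/-- The protoimplication →_{t-max}. -/
def tmax (x y : DM4) : DM4 :=
  match des x, des y with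
  | true, false => n
  | _, _ => t

/-- The protoimplication →_{i-max}. -/
def imax (x y : DM4) : DM4 :=
  match des x, des y with
  | true, false => f
  | _, _ => b

/-- The protoimplication ↔_{t-min}. -/
def tmin (x y : DM4) : DM4 := if x = y then b else f

/-- The protoimplication ↔_{i-min}. -/
def imin (x y : DM4) : DM4 := if x = y then t else n

/-- A binary operation is a protoimplication if it satisfies Reflexivity and Modus Ponens
with respect to the designated set {t, b}. -/
def IsProtoimplication (r : DM4 → DM4 → DM4) : Prop :=
  (∀ a : DM4, r a a ∈ Des) ∧ ∀ a c : DM4, a ∈ Des → r a c ∈ Des → c ∈ Des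

/-- `DMFun k` is the type of De Morgan functions of arity `k + 1` (arities are positive). -/
abbrev DMFun (k : ℕ) : Type := (Fin (k + 1) → DM4) → DM4

/-- Membership in the clone generated by the family of operations `S`
(`S k` is the set of generators of arity `k + 1`). -/
inductive InClone (S : ∀ k : ℕ, Set (DMFun k)) : ∀ k : ℕ, DMFun k → Prop
  | base {k : ℕ} {g : DMFun k} : g ∈ S k → InClone S k g
  | proj {k : ℕ} (i : Fin (k + 1)) : InClone S k (fun x => x i)
  | comp {k m : ℕ} {g : DMFun m} {h : Fin (m + 1) → DMFun k} :
      InClone S m g → (∀ i, InClone S k (h i)) →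
      InClone S k (fun x => g (fun i => h i x))

/-- A family of sets of De Morgan functions is a clone if it contains all projections
and is closed under composition. -/
structure IsClone (C : ∀ k : ℕ, Set (DMFun k)) : Prop where
  proj : ∀ (k : ℕ) (i : Fin (k + 1)), (fun x => x i) ∈ C k
  comp : ∀ (k m : ℕ) (g : DMFun m) (h : Fin (m + 1) → DMFun k),
      g ∈ C m → (∀ i, h i ∈ C k) → (fun x => g (fun i => h i x)) ∈ C k

/-- The generating family consisting of a single unary operation. -/
def op1 (g : DM4 → DM4) : ∀ k : ℕ, Set (DMFun k)
  | 0 => {fun x => g (x 0)}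
  | _ + 1 => ∅

/-- The generating family consisting of a single binary operation. -/
def op2 (g : DM4 → DM4 → DM4) : ∀ k : ℕ, Set (DMFun k)
  | 1 => {fun x => g (x 0) (x 1)}
  | _ => ∅

/-- The generating family consisting of a single ternary operation. -/
def op3 (g : DM4 → DM4 → DM4 → DM4) : ∀ k : ℕ, Set (DMFun k)
  | 2 => {fun x => g (x 0) (x 1) (x 2)}
  | _ => ∅

/-- Union of two families of operations. -/
def funion (S T : ∀ k : ℕ, Set (DMFun k)) : ∀ k : ℕ, Set (DMFun k) := fun k => S k ∪ T k

infixr:65 " ⊹ " => funion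

/-- The generators of DLat: ∧, ∨, t, f (constants as unary constant functions). -/
def DLatGen : ∀ k : ℕ, Set (DMFun k) :=
  op2 meet ⊹ op2 join ⊹ op1 (fun _ => t) ⊹ op1 (fun _ => f)

/-- The generators of DMA: ∧, ∨, t, f, −. -/
def DMAGen : ∀ k : ℕ, Set (DMFun k) := DLatGen ⊹ op1 neg

/-- The generators of BiLat: ∧, ∨, t, f, ⊗, ⊕, n, b. -/
def BiLatGen : ∀ k : ℕ, Set (DMFun k) :=
  DLatGen ⊹ op2 imeet ⊹ op2 ijoin ⊹ op1 (fun _ => n) ⊹ op1 (fun _ => b)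

/-- A De Morgan function is harmonious if it commutes with conflation. -/
def Harmonious {k : ℕ} (g : DMFun k) : Prop :=
  ∀ x : Fin (k + 1) → DM4, g (fun i => conf (x i)) = conf (g x)

/-- A De Morgan function is positive if it is monotone in the componentwise truth order. -/
def Positive {k : ℕ} (g : DMFun k) : Prop :=
  ∀ x y : Fin (k + 1) → DM4, (∀ i, tle (x i) (y i)) → tle (g x) (g y)

/-- A De Morgan function is persistent if it is monotone in the componentwise
information order. -/
def Persistent {k : ℕ} (g : DMFun k) : Prop :=
  ∀ x y : Fin (k + 1) → DM4, (∀ i, ile (x i) (y i)) → ile (g x) (g y)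

/-- A De Morgan function preserves a subset X of DM4 if it maps tuples from X into X. -/
def Preserves {k : ℕ} (g : DMFun k) (X : Set DM4) : Prop :=
  ∀ x : Fin (k + 1) → DM4, (∀ i, x i ∈ X) → g x ∈ X

def B2 : Set DM4 := {t, f}
def K3 : Set DM4 := {t, n, f}
def P3 : Set DM4 := {t, b, f}

/-- A unary operation as a De Morgan function. -/
def toF1 (g : DM4 → DM4) : DMFun 0 := fun x => g (x 0)

/-- A binary operation as a De Morgan function. -/
def toF2 (g : DM4 → DM4 → DM4) : DMFun 1 := fun x => g (x 0) (x 1)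

/-- A ternary operation as a De Morgan function. -/
def toF3 (g : DM4 → DM4 → DM4 → DM4) : DMFun 2 := fun x => g (x 0) (x 1) (x 2)

/-- The clone generated by a family of operations, as a family of sets. -/
def CloneOf (S : ∀ k : ℕ, Set (DMFun k)) : ∀ k : ℕ, Set (DMFun k) :=
  fun k => {g | InClone S k g}

/-- Inclusion of families of operations. -/
def CloneLE (C D : ∀ k : ℕ, Set (DMFun k)) : Prop := ∀ k : ℕ, C k ⊆ D k

/-!
A value `v` is determined by whether `v` and `conf v` are designated; this gives (2) ⇒ (1).

For (1) ⇒ (2), suppose `g ∈ C` and `x` is a tuple. Replacing each coordinate `n`, `b` of `x` by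
a variable `y`, `z` and keeping `t`, `f` as constants gives a binary `u ∈ C` with `u(n, b) = g x`
and `u(b, n) = g (conf x)`. A DMA term masks `u` so that it keeps its values at `(n, b)` and
`(b, n)` and forgets `u` everywhere else. The harmonious binary function with the same
designation pattern at these two points has a mask with the same truth conditions, so by
selfextensionality the two masks are equal, and `u(b, n) = conf (u(n, b))`.
-/

instance : Fintype DM4 :=
  ⟨⟨{t, f, n, b}, by decide⟩, fun x => by cases x <;> decide⟩

instance : DecidablePred (· ∈ Des) :=
  fun a => decidable_of_iff (a = t ∨ a = b) (by simp [Des])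

theorem eq_of_mem_Des_iff_of_conf_mem_Des_iff {a c : DM4} :
    (a ∈ Des ↔ c ∈ Des) → (conf a ∈ Des ↔ conf c ∈ Des) → a = c := by
  revert a c
  decide

theorem exists_mem_Des_iff_and_conf_mem_Des_iff (a c : DM4) :
    ∃ v, (v ∈ Des ↔ a ∈ Des) ∧ (conf v ∈ Des ↔ c ∈ Des) := by
  revert a c
  decide

def SelfExtensional (C : ∀ k : ℕ, Set (DMFun k)) : Prop :=
  ∀ (k : ℕ) (g h : DMFun k), g ∈ C k → h ∈ C k →
    (∀ x : Fin (k + 1) → DM4, (g x ∈ Des ↔ h x ∈ Des)) → g = h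

theorem Harmonious.eq_of_mem_Des_iff {k : ℕ} {g h : DMFun k} (hg : Harmonious g)
    (hh : Harmonious h) (hgh : ∀ x, g x ∈ Des ↔ h x ∈ Des) : g = h := by
  funext x
  refine eq_of_mem_Des_iff_of_conf_mem_Des_iff (hgh x) ?_
  rw [← hg x, ← hh x]
  exact hgh _

theorem selfExtensional_of_forall_harmonious {C : ∀ k : ℕ, Set (DMFun k)}
    (hC : ∀ k, ∀ g ∈ C k, Harmonious g) : SelfExtensional C :=
  fun k _ _ hg hh => (hC k _ hg).eq_of_mem_Des_iff (hC k _ hh)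

namespace IsClone

variable {C : ∀ k : ℕ, Set (DMFun k)}

theorem comp_unary (hC : IsClone C) {g : DM4 → DM4}
    (hg : (fun x : Fin 1 → DM4 => g (x 0)) ∈ C 0) {k : ℕ} {φ : DMFun k}
    (hφ : φ ∈ C k) : (fun x => g (φ x)) ∈ C k :=
  hC.comp k 0 _ (fun _ => φ) hg fun _ => hφ

theorem comp_binary (hC : IsClone C) {g : DM4 → DM4 → DM4}
    (hg : (fun x : Fin 2 → DM4 => g (x 0) (x 1)) ∈ C 1) {k : ℕ} {φ ψ : DMFun k}
    (hφ : φ ∈ C k) (hψ : ψ ∈ C k) : (fun x => g (φ x) (ψ x)) ∈ C k :=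
  hC.comp k 1 _ ![φ, ψ] hg (Fin.forall_fin_two.mpr ⟨hφ, hψ⟩)

theorem const_mem (hC : IsClone C) {c : DM4} (hc : (fun _ : Fin 1 → DM4 => c) ∈ C 0) (k : ℕ) :
    (fun _ => c) ∈ C k :=
  hC.comp_unary (g := fun _ => c) hc (hC.proj k 0)

end IsClone

section AboveDMA

variable {C : ∀ k : ℕ, Set (DMFun k)}

theorem meet_mem_of_DMA (hDMA : ∀ k g, InClone DMAGen k g → g ∈ C k) :
    (fun x : Fin 2 → DM4 => meet (x 0) (x 1)) ∈ C 1 :=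
  hDMA 1 _ (.base (Or.inl (Or.inl rfl)))

theorem join_mem_of_DMA (hDMA : ∀ k g, InClone DMAGen k g → g ∈ C k) :
    (fun x : Fin 2 → DM4 => join (x 0) (x 1)) ∈ C 1 :=
  hDMA 1 _ (.base (Or.inl (Or.inr (Or.inl rfl))))

theorem t_mem_of_DMA (hDMA : ∀ k g, InClone DMAGen k g → g ∈ C k) :
    (fun _ : Fin 1 → DM4 => t) ∈ C 0 :=
  hDMA 0 _ (.base (Or.inl (Or.inr (Or.inr (Or.inl rfl)))))

theorem f_mem_of_DMA (hDMA : ∀ k g, InClone DMAGen k g → g ∈ C k) :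
    (fun _ : Fin 1 → DM4 => f) ∈ C 0 :=
  hDMA 0 _ (.base (Or.inl (Or.inr (Or.inr (Or.inr rfl)))))

theorem neg_mem_of_DMA (hDMA : ∀ k g, InClone DMAGen k g → g ∈ C k) :
    (fun x : Fin 1 → DM4 => neg (x 0)) ∈ C 0 :=
  hDMA 0 _ (.base (Or.inr rfl))

def substNB : DM4 → DM4 → DM4 → DM4
  | t, _, _ => t
  | f, _, _ => f
  | n, y, _ => y
  | b, _, z => z

theorem substNB_n_b (a : DM4) : substNB a n b = a := by cases a <;> rfl

theorem substNB_b_n (a : DM4) : substNB a b n = conf a := by cases a <;> rfl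

theorem substNB_mem (hC : IsClone C) (hDMA : ∀ k g, InClone DMAGen k g → g ∈ C k) (a : DM4) :
    (fun x : Fin 2 → DM4 => substNB a (x 0) (x 1)) ∈ C 1 := by
  cases a
  · exact hC.const_mem (t_mem_of_DMA hDMA) 1
  · exact hC.const_mem (f_mem_of_DMA hDMA) 1
  · exact hC.proj 1 0
  · exact hC.proj 1 1

theorem substNB_comp_mem (hC : IsClone C) (hDMA : ∀ k g, InClone DMAGen k g → g ∈ C k)
    {k : ℕ} {g : DMFun k} (hg : g ∈ C k) (x : Fin (k + 1) → DM4) :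
    (fun y : Fin 2 → DM4 => g fun i => substNB (x i) (y 0) (y 1)) ∈ C 1 :=
  hC.comp 1 k g _ hg fun i => substNB_mem hC hDMA (x i)

/- `a ∨ ¬a` and `a ∧ ¬a` are `t` and `f` on `t`, `f` and fix `n`, `b`; hence `mask a c w` is `w`
at `(n, b)` and `(b, n)` and does not depend on `w` elsewhere. -/
def mask (a c w : DM4) : DM4 :=
  join (meet w (join (meet a (neg a)) (meet c (neg c)))) (meet (join a (neg a)) (join c (neg c)))

theorem mask_n_b (w : DM4) : mask n b w = w := by cases w <;> rfl

theorem mask_b_n (w : DM4) : mask b n w = w := by cases w <;> rfl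

theorem mask_mem_Des_iff {a c w w' : DM4} :
    (a = n → c = b → (w ∈ Des ↔ w' ∈ Des)) → (a = b → c = n → (w ∈ Des ↔ w' ∈ Des)) →
      (mask a c w ∈ Des ↔ mask a c w' ∈ Des) := by
  revert a c w w'
  decide

theorem mask_comp_mem (hC : IsClone C) (hDMA : ∀ k g, InClone DMAGen k g → g ∈ C k)
    {u : DMFun 1} (hu : u ∈ C 1) : (fun x => mask (x 0) (x 1) (u x)) ∈ C 1 := by
  have hMeet : ∀ {φ ψ : DMFun 1}, φ ∈ C 1 → ψ ∈ C 1 → (fun x => meet (φ x) (ψ x)) ∈ C 1 :=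
    hC.comp_binary (meet_mem_of_DMA hDMA)
  have hJoin : ∀ {φ ψ : DMFun 1}, φ ∈ C 1 → ψ ∈ C 1 → (fun x => join (φ x) (ψ x)) ∈ C 1 :=
    hC.comp_binary (join_mem_of_DMA hDMA)
  have hNeg : ∀ {φ : DMFun 1}, φ ∈ C 1 → (fun x => neg (φ x)) ∈ C 1 :=
    hC.comp_unary (neg_mem_of_DMA hDMA)
  have hm : ∀ i, (fun x : Fin 2 → DM4 => meet (x i) (neg (x i))) ∈ C 1 :=
    fun i => hMeet (hC.proj 1 i) (hNeg (hC.proj 1 i))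
  have hj : ∀ i, (fun x : Fin 2 → DM4 => join (x i) (neg (x i))) ∈ C 1 :=
    fun i => hJoin (hC.proj 1 i) (hNeg (hC.proj 1 i))
  exact hJoin (hMeet hu (hJoin (hm 0) (hm 1))) (hMeet (hj 0) (hj 1))

theorem apply_b_n_eq_conf_of_selfExtensional (hC : IsClone C)
    (hDMA : ∀ k g, InClone DMAGen k g → g ∈ C k) (hse : SelfExtensional C) {u : DMFun 1}
    (hu : u ∈ C 1) : u ![b, n] = conf (u ![n, b]) := by
  obtain ⟨v, hnb, hbn⟩ := exists_mem_Des_iff_and_conf_mem_Des_iff (u ![n, b]) (u ![b, n])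
  have hmask := hse 1 _ _ (mask_comp_mem hC hDMA hu)
    (mask_comp_mem hC hDMA (substNB_mem hC hDMA v)) fun x => mask_mem_Des_iff
      (fun h0 h1 => by
        obtain rfl : x = ![n, b] := by ext i; fin_cases i <;> assumption
        simpa [substNB_n_b] using hnb.symm)
      (fun h0 h1 => by
        obtain rfl : x = ![b, n] := by ext i; fin_cases i <;> assumption
        simpa [substNB_b_n] using hbn.symm)
  have hv_nb : u ![n, b] = v := by
    simpa [mask_n_b, substNB_n_b] using congrFun hmask ![n, b]
  have hv_bn : u ![b, n] = conf v := by
    simpa [mask_b_n, substNB_b_n] using congrFun hmask ![b, n]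
  rw [hv_bn, hv_nb]

theorem harmonious_of_selfExtensional (hC : IsClone C)
    (hDMA : ∀ k g, InClone DMAGen k g → g ∈ C k) (hse : SelfExtensional C) {k : ℕ}
    {g : DMFun k} (hg : g ∈ C k) : Harmonious g := by
  intro x
  simpa [substNB_n_b, substNB_b_n] using
    apply_b_n_eq_conf_of_selfExtensional hC hDMA hse (substNB_comp_mem hC hDMA hg x)

end AboveDMA

/-- For a clone C above DMA, the following are equivalent:
(1) any two functions of C with the same truth conditions are equal
(selfextensionality); (2) every function in C is harmonious. -/
theorem selfextensional_clones (C : ∀ k : ℕ, Set (DMFun k))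
    (hC : IsClone C) (hDMA : ∀ k g, InClone DMAGen k g → g ∈ C k) :
    (∀ (k : ℕ) (g h : DMFun k), g ∈ C k → h ∈ C k →
      (∀ x : Fin (k + 1) → DM4, (g x ∈ Des ↔ h x ∈ Des)) → g = h) ↔
    (∀ k : ℕ, ∀ g ∈ C k, Harmonious g) :=
  ⟨fun hse _ _ hg => harmonious_of_selfExtensional hC hDMA hse hg,
    selfExtensional_of_forall_harmonious⟩

end DM4
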